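/- (Relation between the Ising and lattice-gas grand-canonical partition functions.) Let d ≥ 1, J > 0, β ≥ 0, Λ ⊂ ℤ^d finite, E_Λ := {{x,x'} ⊂ ℤ^d : {x,x'} ∩ Λ ≠ ∅, |x−x'| = 1}, and let Ξ̃⁻_{Λ,β}(h) := Σ_{σ ∈ {−1,1}^Λ} exp(βh Σ_{x∈Λ} σ(x) + βJ Σ_{{x,x'}∈E_Λ} σ(x)σ(x')) be the Ising grand-canonical partition function at external field h with −1 boundary conditions (σ(x') := −1 for x' ∉ Λ), and let Ξ⁰_{Λ,β}(μ) := Σ_{N≥0} e^{βμN} Z⁰_{Λ,β}(N) be the lattice-gas grand-canonical partition function. Then for every h ∈ ℝ, Ξ̃⁻_{Λ,β}(h) = exp(−β(h|Λ| − J|E_Λ|)) · Ξ⁰_{Λ,β}(2h − 4Jd). -/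

import Mathlib

open scoped BigOperators Classical

noncomputable section
namespace IsingCE

/-- squared Euclidean norm on `ℤ^d`; it equals `1` exactly at nearest neighbors. -/
def sqnorm {d : ℕ} (x : Fin d → ℤ) : ℤ := ∑ i, (x i)^2

/-- Boltzmann factor `e^{-βV(x)}` of the hard-core Ising lattice-gas potential:
`0` at the origin (hard core, `V = ∞`), `e^{4βJ}` at nearest neighbors (`V = -4J`),
and `1` otherwise (`V = 0`). -/
noncomputable def boltz (d : ℕ) (β J : ℝ) (x : Fin d → ℤ) : ℝ :=
  if x = 0 then 0 else if sqnorm x = 1 then Real.exp (4*β*J) else 1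

/-- canonical partition function `Z⁰_{Λ,β}(N)` of the lattice gas with zero
boundary conditions:
`Z⁰_{Λ,β}(N) = (1/N!) Σ_{x ∈ Λ^N} Π_{1 ≤ i < j ≤ N} e^{-βV(x_i - x_j)}`. -/
noncomputable def Zcan (d : ℕ) (β J : ℝ) (Λ : Finset (Fin d → ℤ)) (N : ℕ) : ℝ :=
  ((N.factorial : ℝ))⁻¹ *
    ∑ x ∈ Fintype.piFinset (fun _ : Fin N => Λ),
      ∏ i : Fin N, ∏ j ∈ Finset.Ioi i, boltz d β J (x i - x j)

/-- the nearest neighbor of `x` in direction `i`, forwards (`b = true`) or backwards. -/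
def nbr {d : ℕ} (x : Fin d → ℤ) (i : Fin d) (b : Bool) : Fin d → ℤ :=
  fun j => x j + (if j = i then (if b then 1 else -1) else 0)

/-- the number `|E_Λ|` of nearest-neighbor edges meeting `Λ` (as a real number):
edges with both endpoints in `Λ` get the factor `1/2` since they appear twice in
the ordered sum, edges with exactly one endpoint in `Λ` appear once. -/
noncomputable def edgeCount (d : ℕ) (Λ : Finset (Fin d → ℤ)) : ℝ :=
  ∑ x ∈ Λ, ∑ i : Fin d, ∑ b : Bool, (if nbr x i b ∈ Λ then (1/2 : ℝ) else 1)

/-- the `±1`-valued spin configuration on `ℤ^d` determined by the Boolean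
configuration `s` on `Λ` and equal to `-1` outside `Λ`. -/
noncomputable def spinOf {d : ℕ} (Λ : Finset (Fin d → ℤ)) (s : {a // a ∈ Λ} → Bool)
    (x : Fin d → ℤ) : ℝ :=
  if hx : x ∈ Λ then (if s ⟨x, hx⟩ then 1 else -1) else -1

/-- Ising Hamiltonian `H⁻(σ) = -J Σ_{{x,x'} ∈ E_Λ} σ(x)σ(x')` with `-1` boundary
conditions; edges inside `Λ` carry the factor `1/2` since they are counted twice in
the ordered sum. -/
noncomputable def isingH (d : ℕ) (J : ℝ) (Λ : Finset (Fin d → ℤ))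
    (s : {a // a ∈ Λ} → Bool) : ℝ :=
  -J * ∑ x ∈ Λ, ∑ i : Fin d, ∑ b : Bool,
    (if nbr x i b ∈ Λ then (1/2 : ℝ) else 1) * spinOf Λ s x * spinOf Λ s (nbr x i b)

/-- value `±1` of a Boolean spin. -/
def spinval (b : Bool) : ℝ := if b then 1 else -1

/-- grand-canonical partition function
`Ξ⁰_{Λ,β}(μ) = Σ_{N ≥ 0} e^{βμN} Z⁰_{Λ,β}(N)` of the lattice gas with zero
boundary conditions. -/
noncomputable def GCpart (d : ℕ) (β J μ : ℝ) (Λ : Finset (Fin d → ℤ)) : ℝ :=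
  ∑' N : ℕ, Real.exp (β * μ * N) * Zcan d β J Λ N

/-- grand-canonical Ising partition function
`Ξ̃⁻_{Λ,β}(h) = Σ_σ exp(βh Σ_x σ(x) - βH⁻(σ))` with `-1` boundary conditions. -/
noncomputable def XiIsing (d : ℕ) (β J h : ℝ) (Λ : Finset (Fin d → ℤ)) : ℝ :=
  ∑ s : {a // a ∈ Λ} → Bool,
    Real.exp (β * h * (∑ x : {a // a ∈ Λ}, spinval (s x)) - β * isingH d J Λ s)

/-! Writing `σ = 2·1_A - 1` for the set `A ⊆ Λ` of up spins turns `∑ σ` into `2|A| - |Λ|` and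
the bond sum into `2 n(A) - 4d|A| + |E_Λ|`, where `n(A)` counts ordered nearest-neighbour pairs in
`A`. On the lattice-gas side the hard core kills every tuple with a repeated site, and each of the
`N!` injective tuples with image `A` has weight `exp(2βJ n(A))`, so
`Ξ⁰(μ) = ∑_{A ⊆ Λ} e^{βμ|A|} e^{2βJ n(A)}`. At `μ = 2h - 4Jd` the two sums agree term by term. -/

open Finset

lemma two_mul_sum_sum_Ioi {ι R : Type*} [Fintype ι] [LinearOrder ι] [LocallyFiniteOrderTop ι]
    [LocallyFiniteOrderBot ι] [NonAssocSemiring R] {g : ι → ι → R}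
    (hsymm : ∀ i j, g i j = g j i) (hdiag : ∀ i, g i i = 0) :
    2 * ∑ i, ∑ j ∈ Ioi i, g i j = ∑ i, ∑ j, g i j := by
  calc 2 * ∑ i, ∑ j ∈ Ioi i, g i j = ∑ i, ∑ j ∈ Ioi i, (g j i + g i j) := by
        simp only [mul_sum]
        exact sum_congr rfl fun i _ => sum_congr rfl fun j _ => by rw [hsymm j i, two_mul]
    _ = ∑ i, ∑ j, g j i := by
        rw [sum_sum_Ioi_add_eq_sum_sum_off_diag]
        refine sum_congr rfl fun i _ => ?_
        rw [compl_singleton, sum_erase univ (f := fun j => g j i) (hdiag i)]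
    _ = ∑ i, ∑ j, g i j := sum_comm

lemma injective_of_card_image_eq {α : Type*} [DecidableEq α] {N : ℕ} {x : Fin N → α}
    (hx : #(univ.image x) = N) : Function.Injective x := by
  rw [← Set.injOn_univ, ← coe_univ, ← card_image_iff, hx, card_univ, Fintype.card_fin]

lemma card_piFinset_filter_image_eq {α : Type*} [DecidableEq α] {N : ℕ} {Λ A : Finset α}
    (hA : A ⊆ Λ) (hcard : #A = N) :
    #{x ∈ Fintype.piFinset fun _ : Fin N => Λ | univ.image x = A} = N.factorial := by
  have hequiv : Fintype.card (Fin N ≃ A) = N.factorial := by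
    rw [Fintype.card_equiv (Fintype.equivOfCardEq (by simp [hcard])), Fintype.card_fin]
  rw [← hequiv, ← card_univ]
  symm
  refine card_bij (fun e _ i => (e i : α)) (fun e _ => ?_) (fun e _ e' _ h => ?_) fun x hx => ?_
  · simp only [mem_filter, Fintype.mem_piFinset]
    refine ⟨fun i => hA (e i).2, ?_⟩
    ext a
    simp only [mem_image, mem_univ, true_and]
    exact ⟨by rintro ⟨i, rfl⟩; exact (e i).2, fun ha => ⟨e.symm ⟨a, ha⟩, by simp⟩⟩
  · exact Equiv.ext fun i => Subtype.ext (congrFun h i)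
  · obtain ⟨-, himage⟩ := mem_filter.1 hx
    have hmem : ∀ i, x i ∈ A := fun i => himage ▸ mem_image_of_mem x (mem_univ i)
    refine ⟨Equiv.ofBijective (fun i => ⟨x i, hmem i⟩) ⟨fun i j h => ?_, fun a => ?_⟩,
      mem_univ _, rfl⟩
    · exact injective_of_card_image_eq (himage ▸ hcard) (congrArg Subtype.val h)
    · obtain ⟨i, -, hi⟩ := mem_image.1 (by rw [himage]; exact a.2)
      exact ⟨i, Subtype.ext hi⟩

section

variable {d : ℕ}

def unitVec (i : Fin d) (b : Bool) : Fin d → ℤ := Pi.single i (if b then 1 else -1)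

lemma nbr_eq_add_unitVec (x : Fin d → ℤ) (i : Fin d) (b : Bool) :
    nbr x i b = x + unitVec i b := by
  funext j
  by_cases hj : j = i
  · subst hj; simp [nbr, unitVec]
  · simp [nbr, unitVec, hj]

lemma unitVec_inj {i i' : Fin d} {b b' : Bool} :
    unitVec i b = unitVec i' b' ↔ i = i' ∧ b = b' := by
  refine ⟨fun h => ?_, fun ⟨hi, hb⟩ => hi ▸ hb ▸ rfl⟩
  have hi : i = i' := by
    by_contra hne
    have := congrFun h i
    cases b <;> simp [unitVec, hne] at this
  subst hi
  have := congrFun h i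
  cases b <;> cases b' <;> simp_all [unitVec]

lemma sqnorm_unitVec (i : Fin d) (b : Bool) : sqnorm (unitVec i b) = 1 := by
  cases b <;> simp [sqnorm, unitVec, Pi.single_apply, ite_pow]

lemma sqnorm_eq_one_iff {z : Fin d → ℤ} : sqnorm z = 1 ↔ ∃ i b, unitVec i b = z := by
  refine ⟨fun hz => ?_, fun ⟨i, b, hz⟩ => hz ▸ sqnorm_unitVec i b⟩
  have hsq : ∀ j, 0 ≤ z j ^ 2 := fun j => sq_nonneg _
  obtain ⟨i, hi⟩ : ∃ i, z i ≠ 0 := by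
    by_contra! h0
    simp [sqnorm, h0] at hz
  have hpos : 0 < z i ^ 2 := by positivity
  have hnonneg := sum_nonneg fun j (_ : j ∈ univ.erase i) => hsq j
  have hsplit := add_sum_erase univ (fun j => z j ^ 2) (mem_univ i)
  unfold sqnorm at hz
  have hzi : z i ^ 2 = 1 := by omega
  have hrest : ∑ j ∈ univ.erase i, z j ^ 2 = 0 := by omega
  have hzero : ∀ j ≠ i, z j = 0 := fun j hj =>
    pow_eq_zero_iff two_ne_zero |>.1 <|
      (sum_eq_zero_iff_of_nonneg fun j _ => hsq j).1 hrest j (mem_erase.2 ⟨hj, mem_univ j⟩)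
  refine ⟨i, z i = 1, funext fun j => ?_⟩
  by_cases hj : j = i
  · subst hj
    rcases sq_eq_one_iff.1 hzi with h | h <;> simp [unitVec, h]
  · simp [unitVec, hj, hzero j hj]

def nbrIndicator (z : Fin d → ℤ) : ℝ := if sqnorm z = 1 then 1 else 0

lemma sqnorm_neg (z : Fin d → ℤ) : sqnorm (-z) = sqnorm z := by
  simp [sqnorm]

lemma nbrIndicator_neg (z : Fin d → ℤ) : nbrIndicator (-z) = nbrIndicator z := by
  rw [nbrIndicator, nbrIndicator, sqnorm_neg]

lemma nbrIndicator_zero : nbrIndicator (0 : Fin d → ℤ) = 0 := by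
  simp [nbrIndicator, sqnorm]

lemma sum_unitVec_eq_nbrIndicator (z : Fin d → ℤ) :
    ∑ i, ∑ b, (if unitVec i b = z then (1 : ℝ) else 0) = nbrIndicator z := by
  by_cases hz : sqnorm z = 1
  · obtain ⟨i, b, rfl⟩ := sqnorm_eq_one_iff.1 hz
    simp [nbrIndicator, hz, unitVec_inj, ite_and]
  · simp only [nbrIndicator, hz, if_false]
    refine sum_eq_zero fun i _ => sum_eq_zero fun b _ => if_neg ?_
    rintro rfl
    exact hz (sqnorm_unitVec i b)

def nbrPairCount (A B : Finset (Fin d → ℤ)) : ℝ := ∑ x ∈ A, ∑ y ∈ B, nbrIndicator (y - x)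

lemma nbrPairCount_comm (A B : Finset (Fin d → ℤ)) : nbrPairCount A B = nbrPairCount B A := by
  rw [nbrPairCount, nbrPairCount, sum_comm]
  exact sum_congr rfl fun y _ => sum_congr rfl fun x _ => by rw [← nbrIndicator_neg, neg_sub]

def nbrCount (x : Fin d → ℤ) (B : Finset (Fin d → ℤ)) : ℝ :=
  ∑ i, ∑ b, if nbr x i b ∈ B then 1 else 0

lemma nbrCount_eq_sum_nbrIndicator (x : Fin d → ℤ) (B : Finset (Fin d → ℤ)) :
    nbrCount x B = ∑ y ∈ B, nbrIndicator (y - x) := by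
  simp only [nbrCount, ← sum_unitVec_eq_nbrIndicator, eq_sub_iff_add_eq', nbr_eq_add_unitVec]
  rw [eq_comm, sum_comm]
  refine sum_congr rfl fun i _ => ?_
  rw [sum_comm]
  exact sum_congr rfl fun b _ => sum_ite_eq B _ _

lemma sum_nbrCount (A B : Finset (Fin d → ℤ)) : ∑ x ∈ A, nbrCount x B = nbrPairCount A B :=
  sum_congr rfl fun x _ => nbrCount_eq_sum_nbrIndicator x B

section BondSum

variable {A Λ : Finset (Fin d → ℤ)}

-- Summed over the bonds, the last two terms give `nbrPairCount A Λ - nbrPairCount Λ A = 0`.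
lemma bond_weight_mul_spins (hA : A ⊆ Λ) (x y : Fin d → ℤ) :
    (if y ∈ Λ then (1 / 2 : ℝ) else 1) * (if x ∈ A then 1 else -1) * (if y ∈ A then 1 else -1)
      = (if y ∈ Λ then 1 / 2 else 1)
        + (if x ∈ A then 1 else 0) * (2 * (if y ∈ A then 1 else 0) - 2 + (if y ∈ Λ then 1 else 0))
        - (if y ∈ A then 1 else 0) := by
  have hAy := @hA y
  split_ifs <;> first | tauto | norm_num

lemma sum_nbr_bond_weight_mul_spins (hA : A ⊆ Λ) (x : Fin d → ℤ) :
    ∑ i, ∑ b, (if nbr x i b ∈ Λ then (1 / 2 : ℝ) else 1) * (if x ∈ A then 1 else -1)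
        * (if nbr x i b ∈ A then 1 else -1)
      = ∑ i, ∑ b, (if nbr x i b ∈ Λ then (1 / 2 : ℝ) else 1)
        + (if x ∈ A then 1 else 0) * (2 * nbrCount x A - 4 * d + nbrCount x Λ)
        - nbrCount x A := by
  simp only [bond_weight_mul_spins hA, sum_add_distrib, sum_sub_distrib, ← mul_sum, nbrCount,
    sum_const, card_univ, Fintype.card_bool, Fintype.card_fin, nsmul_eq_mul]
  push_cast
  ring

lemma sum_bond_weight_mul_spins (hA : A ⊆ Λ) :
    ∑ x ∈ Λ, ∑ i, ∑ b, (if nbr x i b ∈ Λ then (1 / 2 : ℝ) else 1)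
        * (if x ∈ A then 1 else -1) * (if nbr x i b ∈ A then 1 else -1)
      = 2 * nbrPairCount A A - 4 * d * #A + edgeCount d Λ := by
  rw [sum_congr rfl fun x _ => sum_nbr_bond_weight_mul_spins hA x, sum_sub_distrib,
    sum_add_distrib, ← edgeCount]
  simp only [ite_mul, one_mul, zero_mul]
  rw [sum_ite_mem, inter_eq_right.2 hA, sum_add_distrib, sum_sub_distrib, ← mul_sum,
    sum_nbrCount, sum_nbrCount, sum_nbrCount, nbrPairCount_comm Λ A, sum_const, nsmul_eq_mul]
  ring

end BondSum

section Ising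

variable {Λ : Finset (Fin d → ℤ)}

def upSet (s : {a // a ∈ Λ} → Bool) : Finset (Fin d → ℤ) :=
  (univ.filter fun a => s a).map (Function.Embedding.subtype _)

lemma mem_upSet {s : {a // a ∈ Λ} → Bool} {x : Fin d → ℤ} :
    x ∈ upSet s ↔ ∃ hx : x ∈ Λ, s ⟨x, hx⟩ := by
  simp [upSet]

lemma upSet_subset (s : {a // a ∈ Λ} → Bool) : upSet s ⊆ Λ :=
  fun _ hx => (mem_upSet.1 hx).1

lemma spinOf_eq_ite (s : {a // a ∈ Λ} → Bool) (x : Fin d → ℤ) :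
    spinOf Λ s x = if x ∈ upSet s then 1 else -1 := by
  by_cases hx : x ∈ Λ <;> simp [spinOf, hx, mem_upSet]

lemma sum_spinval_eq (s : {a // a ∈ Λ} → Bool) :
    ∑ x, spinval (s x) = 2 * (#(upSet s) : ℝ) - #Λ := by
  have hspin : ∀ x, spinval (s x) = 2 * (if s x then 1 else 0) - 1 := fun x => by
    cases s x <;> norm_num [spinval]
  rw [sum_congr rfl fun x _ => hspin x, sum_sub_distrib, ← mul_sum, sum_boole, sum_const,
    card_univ, Fintype.card_coe, upSet, card_map, nsmul_one]

lemma sum_upSet_eq_sum_powerset {M : Type*} [AddCommMonoid M] (G : Finset (Fin d → ℤ) → M) :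
    ∑ s : {a // a ∈ Λ} → Bool, G (upSet s) = ∑ A ∈ Λ.powerset, G A := by
  refine sum_nbij' upSet (fun A a => decide ((a : Fin d → ℤ) ∈ A))
    (fun s _ => mem_powerset.2 (upSet_subset s)) (fun _ _ => mem_univ _)
    (fun s _ => ?_) (fun A hA => ?_) fun _ _ => rfl
  · funext a
    simp [mem_upSet]
  · ext x
    simpa [mem_upSet] using fun hx => mem_powerset.1 hA hx

lemma isingH_eq (J : ℝ) (s : {a // a ∈ Λ} → Bool) :
    isingH d J Λ s
      = -J * (2 * nbrPairCount (upSet s) (upSet s) - 4 * d * #(upSet s) + edgeCount d Λ) := by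
  simp only [isingH, spinOf_eq_ite]
  rw [sum_bond_weight_mul_spins (upSet_subset s)]

end Ising

section LatticeGas

variable {β J : ℝ}

lemma boltz_of_ne_zero {z : Fin d → ℤ} (hz : z ≠ 0) :
    boltz d β J z = Real.exp (4 * β * J * nbrIndicator z) := by
  by_cases h1 : sqnorm z = 1 <;> simp [boltz, nbrIndicator, hz, h1]

lemma prod_boltz_of_injective {N : ℕ} {x : Fin N → Fin d → ℤ} (hx : Function.Injective x) :
    ∏ i, ∏ j ∈ Ioi i, boltz d β J (x i - x j)
      = Real.exp (2 * β * J * nbrPairCount (univ.image x) (univ.image x)) := by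
  have hpairs :
      nbrPairCount (univ.image x) (univ.image x) = ∑ i, ∑ j, nbrIndicator (x i - x j) := by
    rw [nbrPairCount, sum_image hx.injOn, sum_comm]
    simp only [sum_image hx.injOn]
  have htwice := two_mul_sum_sum_Ioi (g := fun i j => nbrIndicator (x i - x j))
    (fun i j => by rw [← nbrIndicator_neg, neg_sub]) fun i => by rw [sub_self, nbrIndicator_zero]
  calc ∏ i, ∏ j ∈ Ioi i, boltz d β J (x i - x j)
      = ∏ i, ∏ j ∈ Ioi i, Real.exp (4 * β * J * nbrIndicator (x i - x j)) :=
        prod_congr rfl fun i _ => prod_congr rfl fun j hj =>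
          boltz_of_ne_zero (sub_ne_zero.2 (hx.ne (mem_Ioi.1 hj).ne))
    _ = Real.exp (2 * β * J * nbrPairCount (univ.image x) (univ.image x)) := by
        simp only [← Real.exp_sum, ← mul_sum]
        rw [hpairs, ← htwice]
        congr 1
        ring

lemma prod_boltz_of_not_injective {N : ℕ} {x : Fin N → Fin d → ℤ}
    (hx : ¬ Function.Injective x) : ∏ i, ∏ j ∈ Ioi i, boltz d β J (x i - x j) = 0 := by
  obtain ⟨i, j, hij, hne⟩ := Function.not_injective_iff.1 hx
  have hzero : boltz d β J 0 = 0 := if_pos rfl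
  rcases hne.lt_or_gt with hlt | hlt
  · exact prod_eq_zero (mem_univ i) (prod_eq_zero (mem_Ioi.2 hlt) (by rw [hij, sub_self, hzero]))
  · exact prod_eq_zero (mem_univ j) (prod_eq_zero (mem_Ioi.2 hlt) (by rw [hij, sub_self, hzero]))

end LatticeGas

section LatticeGasPartition

variable (β J : ℝ) (Λ : Finset (Fin d → ℤ))

lemma sum_filter_image_prod_boltz {N : ℕ} {A : Finset (Fin d → ℤ)} (hA : A ⊆ Λ) :
    ∑ x ∈ Fintype.piFinset (fun _ : Fin N => Λ) with univ.image x = A,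
        ∏ i, ∏ j ∈ Ioi i, boltz d β J (x i - x j)
      = if #A = N then N.factorial * Real.exp (2 * β * J * nbrPairCount A A) else 0 := by
  split_ifs with hcard
  · rw [← card_piFinset_filter_image_eq hA hcard, ← nsmul_eq_mul, ← sum_const]
    refine sum_congr rfl fun x hx => ?_
    obtain ⟨-, himage⟩ := mem_filter.1 hx
    rw [prod_boltz_of_injective (injective_of_card_image_eq (himage ▸ hcard)), himage]
  · refine sum_eq_zero fun x hx => prod_boltz_of_not_injective fun hinj => hcard ?_
    rw [← (mem_filter.1 hx).2, card_image_of_injective _ hinj, card_univ, Fintype.card_fin]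

lemma Zcan_eq_sum_powersetCard (N : ℕ) :
    Zcan d β J Λ N = ∑ A ∈ powersetCard N Λ, Real.exp (2 * β * J * nbrPairCount A A) := by
  have hmaps : ∀ x ∈ Fintype.piFinset (fun _ : Fin N => Λ), univ.image x ∈ Λ.powerset :=
    fun x hx => mem_powerset.2 <| image_subset_iff.2 fun i _ => Fintype.mem_piFinset.1 hx i
  rw [Zcan, ← sum_fiberwise_of_maps_to hmaps,
    sum_congr rfl fun A hA => sum_filter_image_prod_boltz β J Λ (mem_powerset.1 hA),
    ← sum_filter, powersetCard_eq_filter, mul_sum]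
  refine sum_congr rfl fun A _ => ?_
  rw [← mul_assoc, inv_mul_cancel₀ (by exact_mod_cast N.factorial_ne_zero), one_mul]

lemma GCpart_eq_sum_powerset (μ : ℝ) :
    GCpart d β J μ Λ
      = ∑ A ∈ Λ.powerset, Real.exp (β * μ * #A) * Real.exp (2 * β * J * nbrPairCount A A) := by
  have hvanish : ∀ N ∉ range (#Λ + 1), Real.exp (β * μ * N) * Zcan d β J Λ N = 0 := by
    intro N hN
    rw [Zcan_eq_sum_powersetCard, powersetCard_eq_empty.2 (by simpa using hN), sum_empty,
      mul_zero]
  rw [GCpart, tsum_eq_sum hvanish, sum_powerset]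
  refine sum_congr rfl fun N _ => ?_
  rw [Zcan_eq_sum_powersetCard, mul_sum]
  exact sum_congr rfl fun A hA => by rw [(mem_powersetCard.1 hA).2]

end LatticeGasPartition

end

theorem ising_lattice_gas_grand_canonical_relation_general
    (d : ℕ) (J β : ℝ)
    (Λ : Finset (Fin d → ℤ)) (h : ℝ) :
    XiIsing d β J h Λ =
      Real.exp (-β * (h * (Λ.card : ℝ) - J * edgeCount d Λ)) *
        GCpart d β J (2*h - 4*J*(d : ℝ)) Λ := by
  rw [XiIsing, GCpart_eq_sum_powerset, mul_sum, ← sum_upSet_eq_sum_powerset]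
  refine sum_congr rfl fun s _ => ?_
  rw [sum_spinval_eq, isingH_eq, ← Real.exp_add, ← Real.exp_add]
  congr 1
  ring

/-- relation between the Ising and lattice-gas grand-canonical
partition functions: `Ξ̃⁻_{Λ,β}(h) = exp(-β(h|Λ| - J|E_Λ|)) Ξ⁰_{Λ,β}(2h - 4Jd)`. -/
theorem ising_lattice_gas_grand_canonical_relation
    (d : ℕ) (hd : 1 ≤ d) (J β : ℝ) (hJ : 0 < J) (hβ : 0 ≤ β)
    (Λ : Finset (Fin d → ℤ)) (h : ℝ) :
    XiIsing d β J h Λ =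
      Real.exp (-β * (h * (Λ.card : ℝ) - J * edgeCount d Λ)) *
        GCpart d β J (2*h - 4*J*(d : ℝ)) Λ :=
  ising_lattice_gas_grand_canonical_relation_general d J β Λ h

end IsingCE
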